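/- Let n ≥ 1, s ∈ (0,1), and for δ ∈ (0,1) consider J(δ) = ∫_{{z ∈ ℝⁿ : 0 < z₁ < 1}} z₁^{2s} |δe₁ + z|^{−(n+2s)} dz. Then J(δ) = ∫₀^{1/δ} t^{2s}(1+t)^{−(1+2s)} dt · ∫_{ℝ^{n−1}} (1+|ξ|²)^{−(n/2+s)} dξ, and consequently there exists c > 0 with J(δ) ≥ c·|ln δ| for all δ ∈ (0,1). -/

import Mathlib

/-!
Write `z = (x, y)` with `x = z₁` and `y ∈ ℝⁿ⁻¹`, so that `|δe₁ + z|² = (δ + x)² + |y|²`. For fixed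
`x`, the substitution `y = (δ + x) ξ` turns the `y`-integral into
`(δ + x)^(n - 1 - (n + 2s)) · ∫ (1 + |ξ|²)^(-(n/2 + s)) dξ`, which leaves
`∫₀¹ x^(2s) (δ + x)^(-(1 + 2s)) dx`; rescaling `x = δ t` gives the integral over `(0, 1/δ)`.
All this is done with lower Lebesgue integrals, so no integrability is needed for the identity.
For `t ≥ 1` the integrand is at least `2^(-(1 + 2s)) / t`, whose integral over `(1, 1/δ)` is
`2^(-(1 + 2s)) |log δ|`.
-/

open MeasureTheory Set Real Module
open scoped ENNReal

section HaarScaling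

variable {E : Type*} [NormedAddCommGroup E] [NormedSpace ℝ E] [FiniteDimensional ℝ E]
  [MeasurableSpace E] [BorelSpace E] (μ : Measure E) [μ.IsAddHaarMeasure]

theorem MeasureTheory.Measure.lintegral_comp_inv_smul_of_pos (f : E → ℝ≥0∞) {R : ℝ}
    (hR : 0 < R) : ∫⁻ x, f (R⁻¹ • x) ∂μ = ENNReal.ofReal (R ^ finrank ℝ E) * ∫⁻ x, f x ∂μ := by
  have hR' : R⁻¹ ≠ 0 := inv_ne_zero hR.ne'
  let e : E ≃ᵐ E := (Homeomorph.smul (isUnit_iff_ne_zero.2 hR').unit).toMeasurableEquiv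
  calc ∫⁻ x, f (R⁻¹ • x) ∂μ = ∫⁻ x, f (e x) ∂μ := rfl
    _ = ∫⁻ y, f y ∂(Measure.map (R⁻¹ • ·) μ) := (lintegral_map_equiv f e).symm
    _ = _ := by
      rw [Measure.map_addHaar_smul μ hR', lintegral_smul_measure, smul_eq_mul, inv_pow, inv_inv,
        abs_of_pos (pow_pos hR _)]

theorem lintegral_sq_add_norm_sq_rpow_neg {c : ℝ} (hc : 0 < c) (p : ℝ) :
    ∫⁻ y, ENNReal.ofReal ((c ^ 2 + ‖y‖ ^ 2) ^ (-p)) ∂μ =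
      ENNReal.ofReal (c ^ ((finrank ℝ E : ℝ) - 2 * p)) *
        ∫⁻ ξ, ENNReal.ofReal ((1 + ‖ξ‖ ^ 2) ^ (-p)) ∂μ := by
  have hfactor : ∀ y : E, (c ^ 2 + ‖y‖ ^ 2) ^ (-p) =
      c ^ (-2 * p) * (1 + ‖c⁻¹ • y‖ ^ 2) ^ (-p) := by
    intro y
    have hsplit : c ^ 2 + ‖y‖ ^ 2 = c ^ 2 * (1 + ‖c⁻¹ • y‖ ^ 2) := by
      rw [norm_smul, Real.norm_of_nonneg (inv_nonneg.2 hc.le)]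
      field_simp
    rw [hsplit, Real.mul_rpow (by positivity) (by positivity), neg_mul,
      ← Real.rpow_natCast_mul hc.le 2, Nat.cast_ofNat, mul_neg]
  simp_rw [hfactor, ENNReal.ofReal_mul (Real.rpow_nonneg hc.le _)]
  rw [lintegral_const_mul _ (by fun_prop),
    Measure.lintegral_comp_inv_smul_of_pos μ (fun ξ => ENNReal.ofReal ((1 + ‖ξ‖ ^ 2) ^ (-p))) hc,
    ← mul_assoc, ← ENNReal.ofReal_mul (by positivity), ← Real.rpow_natCast,
    ← Real.rpow_add hc]
  ring_nf

theorem integral_one_add_norm_sq_rpow_neg_pos {p : ℝ} (hp : (finrank ℝ E : ℝ) < 2 * p) :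
    0 < ∫ ξ, (1 + ‖ξ‖ ^ 2) ^ (-p) ∂μ := by
  have hint : Integrable (fun ξ : E => (1 + ‖ξ‖ ^ 2) ^ (-p)) μ := by
    simpa [neg_div] using integrable_rpow_neg_one_add_norm_sq (μ := μ) hp
  have hpos : ∀ ξ : E, 0 < (1 + ‖ξ‖ ^ 2) ^ (-p) := fun ξ => by positivity
  rw [integral_pos_iff_support_of_nonneg (fun ξ => (hpos ξ).le) hint,
    Function.support_eq_univ fun ξ => (hpos ξ).ne']
  exact isOpen_univ.measure_pos μ univ_nonempty

end HaarScaling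

namespace EuclideanSpace

variable {m : ℕ}

def removeNth (i : Fin (m + 1)) (z : EuclideanSpace ℝ (Fin (m + 1))) :
    EuclideanSpace ℝ (Fin m) :=
  WithLp.toLp 2 (Fin.removeNth i z.ofLp)

@[simp]
theorem removeNth_apply (i : Fin (m + 1)) (z : EuclideanSpace ℝ (Fin (m + 1))) (j : Fin m) :
    removeNth i z j = z (i.succAbove j) := rfl

theorem measurePreserving_apply_prod_removeNth (i : Fin (m + 1)) :
    MeasurePreserving (fun z : EuclideanSpace ℝ (Fin (m + 1)) => (z i, removeNth i z))
      volume volume :=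
  ((MeasurePreserving.id volume).prod
      (volume_preserving_symm_measurableEquiv_toLp (Fin m)).symm).comp
    ((volume_preserving_piFinSuccAbove (fun _ => ℝ) i).comp
      (volume_preserving_symm_measurableEquiv_toLp (Fin (m + 1))))

theorem norm_sq_eq_sq_add_norm_sq_removeNth (i : Fin (m + 1))
    (z : EuclideanSpace ℝ (Fin (m + 1))) : ‖z‖ ^ 2 = z i ^ 2 + ‖removeNth i z‖ ^ 2 := by
  simp only [EuclideanSpace.norm_sq_eq, Real.norm_eq_abs, sq_abs, removeNth_apply]
  exact Fin.sum_univ_succAbove _ i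

theorem removeNth_smul_single_add (i : Fin (m + 1)) (δ : ℝ)
    (z : EuclideanSpace ℝ (Fin (m + 1))) :
    removeNth i (δ • EuclideanSpace.single i 1 + z) = removeNth i z := by
  ext j
  simp [Fin.succAbove_ne i j]

theorem setLIntegral_apply_mem_eq (i : Fin (m + 1)) {S : Set ℝ} (hS : MeasurableSet S)
    {F : ℝ × EuclideanSpace ℝ (Fin m) → ℝ≥0∞} (hF : Measurable F) :
    ∫⁻ z in {z : EuclideanSpace ℝ (Fin (m + 1)) | z i ∈ S}, F (z i, removeNth i z) =
      ∫⁻ x in S, ∫⁻ y, F (x, y) := by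
  have hpre : {z : EuclideanSpace ℝ (Fin (m + 1)) | z i ∈ S} =
      (fun z => (z i, removeNth i z)) ⁻¹' (S ×ˢ univ) := by
    ext z; simp
  rw [hpre, (measurePreserving_apply_prod_removeNth i).setLIntegral_comp_preimage
      (hS.prod MeasurableSet.univ) hF,
    Measure.volume_eq_prod, ← Measure.prod_restrict, Measure.restrict_univ]
  exact lintegral_prod _ hF.aemeasurable

end EuclideanSpace

theorem integral_rpow_mul_one_add_rpow_neg_eq (a : ℝ) {δ : ℝ} (hδ : 0 < δ) :
    ∫ t in (0 : ℝ)..1 / δ, t ^ a * (1 + t) ^ (-(1 + a)) =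
      ∫ x in (0 : ℝ)..1, x ^ a * (δ + x) ^ (-(1 + a)) := by
  set f : ℝ → ℝ := fun x => x ^ a * (δ + x) ^ (-(1 + a))
  have hscale : ∀ t ∈ uIcc (0 : ℝ) (1 / δ), t ^ a * (1 + t) ^ (-(1 + a)) = δ * f (δ * t) := by
    intro t ht
    rw [uIcc_of_le (by positivity)] at ht
    have hδpow : δ * (δ ^ a * δ ^ (-(1 + a))) = 1 := by
      rw [← Real.rpow_add hδ, show a + -(1 + a) = -1 by ring, Real.rpow_neg_one,
        mul_inv_cancel₀ hδ.ne']
    simp only [f]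
    rw [show δ + δ * t = δ * (1 + t) by ring, Real.mul_rpow hδ.le ht.1,
      Real.mul_rpow hδ.le (by linarith [ht.1])]
    linear_combination (t ^ a * (1 + t) ^ (-(1 + a))) * hδpow.symm
  rw [intervalIntegral.integral_congr hscale, intervalIntegral.integral_const_mul,
    intervalIntegral.integral_comp_mul_left f hδ.ne', mul_zero, mul_one_div_cancel hδ.ne',
    smul_eq_mul, mul_inv_cancel_left₀ hδ.ne']

theorem two_rpow_mul_inv_le_rpow_mul_one_add_rpow_neg {a t : ℝ} (ha : -1 ≤ a) (ht : 1 ≤ t) :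
    2 ^ (-(1 + a)) * t⁻¹ ≤ t ^ a * (1 + t) ^ (-(1 + a)) := by
  have ht0 : 0 < t := by linarith
  calc 2 ^ (-(1 + a)) * t⁻¹ = t ^ a * (2 * t) ^ (-(1 + a)) := by
        rw [Real.mul_rpow two_pos.le ht0.le, Real.rpow_neg ht0.le, Real.rpow_add ht0,
          Real.rpow_one]
        field_simp
    _ ≤ t ^ a * (1 + t) ^ (-(1 + a)) := by
        gcongr ?_ * ?_
        exact Real.rpow_le_rpow_of_nonpos (by linarith) (by linarith) (by linarith)

theorem mul_abs_log_le_integral_rpow_mul_one_add_rpow_neg {a δ : ℝ} (ha : 0 ≤ a) (hδ : 0 < δ)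
    (hδ1 : δ < 1) :
    2 ^ (-(1 + a)) * |log δ| ≤ ∫ t in (0 : ℝ)..1 / δ, t ^ a * (1 + t) ^ (-(1 + a)) := by
  have hone : 1 ≤ 1 / δ := by rw [le_div_iff₀ hδ]; linarith
  have hcont : ContinuousOn (fun t : ℝ => t ^ a * (1 + t) ^ (-(1 + a))) (Ici 0) :=
    (Real.continuous_rpow_const ha).continuousOn.mul
      ((continuous_const_add 1).continuousOn.rpow_const fun t ht =>
        Or.inl (by linarith [mem_Ici.1 ht]))
  have hint : ∀ {u v : ℝ}, 0 ≤ u → u ≤ v →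
      IntervalIntegrable (fun t : ℝ => t ^ a * (1 + t) ^ (-(1 + a))) volume u v :=
    fun hu huv => (hcont.mono fun t ht => by
      rw [uIcc_of_le huv] at ht; exact hu.trans ht.1).intervalIntegrable
  have hinv : ContinuousOn (fun t : ℝ => 2 ^ (-(1 + a)) * t⁻¹) (uIcc 1 (1 / δ)) :=
    continuousOn_const.mul (continuousOn_inv₀.mono fun t ht => by
      rw [uIcc_of_le hone] at ht; exact (zero_lt_one.trans_le ht.1).ne')
  calc 2 ^ (-(1 + a)) * |log δ| = ∫ t in (1 : ℝ)..1 / δ, 2 ^ (-(1 + a)) * t⁻¹ := by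
        rw [intervalIntegral.integral_const_mul, integral_inv_of_pos one_pos (by positivity),
          div_one, one_div, Real.log_inv, abs_of_neg (Real.log_neg hδ hδ1)]
    _ ≤ ∫ t in (1 : ℝ)..1 / δ, t ^ a * (1 + t) ^ (-(1 + a)) :=
        intervalIntegral.integral_mono_on hone hinv.intervalIntegrable (hint zero_le_one hone)
          fun t ht => two_rpow_mul_inv_le_rpow_mul_one_add_rpow_neg (by linarith) ht.1
    _ ≤ ∫ t in (0 : ℝ)..1 / δ, t ^ a * (1 + t) ^ (-(1 + a)) :=
        intervalIntegral.integral_mono_interval zero_le_one hone le_rfl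
          ((ae_restrict_mem measurableSet_Ioc).mono fun t ht =>
            mul_nonneg (Real.rpow_nonneg ht.1.le _) (Real.rpow_nonneg (by linarith [ht.1]) _))
          (hint le_rfl (by positivity))

open EuclideanSpace in
theorem lintegral_slab_rpow_mul_norm_rpow_neg {m : ℕ} (i : Fin (m + 1)) (s : ℝ) {δ : ℝ}
    (hδ : 0 ≤ δ) :
    ∫⁻ z in {z : EuclideanSpace ℝ (Fin (m + 1)) | 0 < z i ∧ z i < 1},
        ENNReal.ofReal (z i ^ (2 * s) *
          ‖δ • EuclideanSpace.single i (1 : ℝ) + z‖ ^ (-(((m + 1 : ℕ) : ℝ) + 2 * s))) =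
      (∫⁻ x in Ioo 0 1, ENNReal.ofReal (x ^ (2 * s) * (δ + x) ^ (-(1 + 2 * s)))) *
        ∫⁻ ξ : EuclideanSpace ℝ (Fin m),
          ENNReal.ofReal ((1 + ‖ξ‖ ^ 2) ^ (-(((m + 1 : ℕ) : ℝ) / 2 + s))) := by
  set p : ℝ := ((m + 1 : ℕ) : ℝ) / 2 + s
  have hnorm : ∀ z : EuclideanSpace ℝ (Fin (m + 1)),
      ‖δ • single i (1 : ℝ) + z‖ ^ (-(((m + 1 : ℕ) : ℝ) + 2 * s)) =
        ((δ + z i) ^ 2 + ‖removeNth i z‖ ^ 2) ^ (-p) := by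
    intro z
    have hv := norm_sq_eq_sq_add_norm_sq_removeNth i (δ • single i (1 : ℝ) + z)
    simp only [removeNth_smul_single_add, PiLp.add_apply, PiLp.smul_apply, PiLp.single_apply,
      if_pos, smul_eq_mul, mul_one] at hv
    rw [← hv, ← Real.rpow_natCast_mul (norm_nonneg _)]
    congr 1
    simp only [p]
    push_cast
    ring
  simp_rw [hnorm]
  refine (setLIntegral_apply_mem_eq i measurableSet_Ioo
      (F := fun w => ENNReal.ofReal (w.1 ^ (2 * s) * ((δ + w.1) ^ 2 + ‖w.2‖ ^ 2) ^ (-p)))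
      (by fun_prop)).trans ?_
  rw [← lintegral_mul_const _ (by fun_prop)]
  refine setLIntegral_congr_fun measurableSet_Ioo fun x hx => ?_
  have hx0 : 0 < δ + x := by linarith [hx.1]
  have hexp : (m : ℝ) - 2 * p = -(1 + 2 * s) := by
    simp only [p]
    push_cast
    ring
  simp only [ENNReal.ofReal_mul (Real.rpow_nonneg hx.1.le _)]
  rw [lintegral_const_mul _ (by fun_prop), lintegral_sq_add_norm_sq_rpow_neg _ hx0,
    finrank_euclideanSpace_fin, hexp, mul_assoc]

theorem integral_slab_rpow_mul_norm_rpow_neg {m : ℕ} (i : Fin (m + 1)) (s : ℝ) {δ : ℝ}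
    (hδ : 0 < δ) :
    ∫ z in {z : EuclideanSpace ℝ (Fin (m + 1)) | 0 < z i ∧ z i < 1},
        z i ^ (2 * s) *
          ‖δ • EuclideanSpace.single i (1 : ℝ) + z‖ ^ (-(((m + 1 : ℕ) : ℝ) + 2 * s)) =
      (∫ t in (0 : ℝ)..1 / δ, t ^ (2 * s) * (1 + t) ^ (-(1 + 2 * s))) *
        ∫ ξ : EuclideanSpace ℝ (Fin m), (1 + ‖ξ‖ ^ 2) ^ (-(((m + 1 : ℕ) : ℝ) / 2 + s)) := by
  have hslab : MeasurableSet {z : EuclideanSpace ℝ (Fin (m + 1)) | 0 < z i ∧ z i < 1} :=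
    measurableSet_Ioo.preimage (by fun_prop)
  rw [integral_eq_lintegral_of_nonneg_ae, lintegral_slab_rpow_mul_norm_rpow_neg i s hδ.le,
    ENNReal.toReal_mul, ← integral_eq_lintegral_of_nonneg_ae, ← integral_eq_lintegral_of_nonneg_ae,
    integral_rpow_mul_one_add_rpow_neg_eq _ hδ, intervalIntegral.integral_of_le zero_le_one,
    integral_Ioc_eq_integral_Ioo]
  · exact ae_of_all _ fun ξ => by positivity
  · exact (by fun_prop : Measurable _).aestronglyMeasurable
  · filter_upwards [ae_restrict_mem measurableSet_Ioo] with x hx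
    exact mul_nonneg (Real.rpow_nonneg hx.1.le _) (Real.rpow_nonneg (by linarith [hx.1]) _)
  · exact (by fun_prop : Measurable _).aestronglyMeasurable
  · filter_upwards [ae_restrict_mem hslab] with z hz
    exact mul_nonneg (Real.rpow_nonneg hz.1.le _) (by positivity)
  · exact (by fun_prop : Measurable _).aestronglyMeasurable

theorem stmt9 {n : ℕ} (hn : 0 < n) (s : ℝ) (hs : s ∈ Set.Ioo (0:ℝ) 1)
    (J : ℝ → ℝ)
    (hJ : ∀ δ : ℝ, J δ =
      ∫ z in {z : EuclideanSpace ℝ (Fin n) | 0 < z ⟨0, hn⟩ ∧ z ⟨0, hn⟩ < 1},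
        (z ⟨0, hn⟩) ^ (2*s) *
          ‖δ • EuclideanSpace.single (⟨0, hn⟩ : Fin n) (1:ℝ) + z‖ ^ (-((n : ℝ) + 2*s))) :
    (∀ δ ∈ Set.Ioo (0:ℝ) 1,
      J δ = (∫ t in (0:ℝ)..(1/δ), t ^ (2*s) * (1+t) ^ (-(1+2*s))) *
            (∫ ξ : EuclideanSpace ℝ (Fin (n-1)), (1 + ‖ξ‖^2) ^ (-((n : ℝ)/2 + s)))) ∧
    ∃ c > 0, ∀ δ ∈ Set.Ioo (0:ℝ) 1, c * |Real.log δ| ≤ J δ := by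
  obtain ⟨m, rfl⟩ : ∃ m, n = m + 1 := ⟨n - 1, (Nat.succ_pred_eq_of_pos hn).symm⟩
  set B : ℝ := ∫ ξ : EuclideanSpace ℝ (Fin m), (1 + ‖ξ‖ ^ 2) ^ (-(((m + 1 : ℕ) : ℝ) / 2 + s))
  have hJ_eq : ∀ δ ∈ Ioo (0 : ℝ) 1,
      J δ = (∫ t in (0 : ℝ)..1 / δ, t ^ (2 * s) * (1 + t) ^ (-(1 + 2 * s))) * B :=
    fun δ hδ => (hJ δ).trans (integral_slab_rpow_mul_norm_rpow_neg _ s hδ.1)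
  have hB : 0 < B := integral_one_add_norm_sq_rpow_neg_pos _ (by
    rw [finrank_euclideanSpace_fin]; push_cast; linarith [hs.1])
  refine ⟨hJ_eq, 2 ^ (-(1 + 2 * s)) * B, by positivity, fun δ hδ => ?_⟩
  rw [hJ_eq δ hδ, mul_right_comm]
  exact mul_le_mul_of_nonneg_right
    (mul_abs_log_le_integral_rpow_mul_one_add_rpow_neg (by linarith [hs.1]) hδ.1 hδ.2) hB.le
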